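/- arXiv:2411.05462 — 6 statements merged into one kernel-verified Lean document; each statement's English description precedes it below -/
import Mathlib

section
/- Let G be a finite simple graph on vertex set V = {1,…,N} with graph Laplacian Δ, let η > 0 and T⁰ > 0, and let S ⊆ V be a strategic set of vertices. If X : [0,T⁰] → ℝ^N is twice continuously differentiable, satisfies X''(t) + η X'(t) − Δ X(t) = 0 for all t ∈ [0,T⁰], and the component x_n(t) = 0 for all t ∈ [0,T⁰] and every n ∈ S, then X(0) = 0 and X'(0) = 0 (hence X ≡ 0 on [0,T⁰]). -/
/-- The graph Laplacian of a finite simple graph on `Fin N`: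
`Δ k l = 1` if `k ≠ l` are adjacent, `0` if `k ≠ l` are not adjacent, and
`Δ k k = -deg k`. -/
def graphLaplacian {N : ℕ} (G : SimpleGraph (Fin N)) [DecidableRel G.Adj] :
    Matrix (Fin N) (Fin N) ℝ :=
  Matrix.of fun k l => if k = l then -(G.degree k : ℝ) else if G.Adj k l then 1 else 0

/-- A set `S` of vertices is *strategic* if for every eigenvalue `μ` of `Δ`, with `m` the
dimension of the corresponding eigenspace and `v 0, …, v (m-1)` any basis of that eigenspace,
there exist `m` vertices `i 0, …, i (m-1)` in `S` such that the `m × m` matrix with entries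
`(v q) (i p)` is invertible. -/
def Strategic {N : ℕ} (Δ : Matrix (Fin N) (Fin N) ℝ) (S : Finset (Fin N)) : Prop :=
  ∀ (μ : ℝ) (m : ℕ) (v : Fin m → (Fin N → ℝ)),
    (∀ q, v q ∈ Module.End.eigenspace (Matrix.toLin' Δ) μ) →
    LinearIndependent ℝ v →
    Submodule.span ℝ (Set.range v) = Module.End.eigenspace (Matrix.toLin' Δ) μ →
    ∃ i : Fin m → Fin N, (∀ p, i p ∈ S) ∧
      IsUnit (Matrix.of fun p q : Fin m => v q (i p))

lemma strategic_eigen_zero {N : ℕ} {Δ : Matrix (Fin N) (Fin N) ℝ} {S : Finset (Fin N)}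
    (hS : Strategic Δ S) (μ : ℝ) (w : Fin N → ℝ)
    (hw : w ∈ Module.End.eigenspace (Matrix.toLin' Δ) μ)
    (hwS : ∀ i ∈ S, w i = 0) : w = 0 := by
  set Esp := Module.End.eigenspace (Matrix.toLin' Δ) μ with hEsp
  let m := Module.finrank ℝ Esp
  let b : Module.Basis (Fin m) ℝ Esp := Module.finBasis ℝ Esp
  let v : Fin m → (Fin N → ℝ) := fun q => (b q : Fin N → ℝ)
  have hvmem : ∀ q, v q ∈ Esp := fun q => (b q).2
  have hli : LinearIndependent ℝ v :=
    b.linearIndependent.map' Esp.subtype (Submodule.ker_subtype Esp)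
  have hspan : Submodule.span ℝ (Set.range v) = Esp := by
    have hrv : Set.range v = Esp.subtype '' Set.range b := by
      rw [← Set.range_comp]; rfl
    rw [hrv, ← Submodule.map_span, b.span_eq, Submodule.map_top, Submodule.range_subtype]
  obtain ⟨i, hiS, hM⟩ := hS μ m v hvmem hli hspan
  obtain ⟨c, hc⟩ := (Submodule.mem_span_range_iff_exists_fun ℝ).1 (hspan ▸ hw)
  have hMc : (Matrix.of fun p q : Fin m => v q (i p)).mulVec c = 0 := by
    funext p
    have : w (i p) = 0 := hwS (i p) (hiS p)
    rw [← hc] at this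
    simpa [Matrix.mulVec, dotProduct, Finset.sum_apply, mul_comm] using this
  have hc0 : c = 0 := by
    have hinj := Matrix.mulVec_injective_iff_isUnit.2 hM
    have : (Matrix.of fun p q : Fin m => v q (i p)).mulVec c
        = (Matrix.of fun p q : Fin m => v q (i p)).mulVec 0 := by
      rw [hMc, Matrix.mulVec_zero]
    exact hinj this
  rw [← hc, hc0]
  simp

lemma complex_eigen_zero {N : ℕ} {Δ : Matrix (Fin N) (Fin N) ℝ} {S : Finset (Fin N)}
    (hS : Strategic Δ S) (hsymm : ∀ k l, Δ k l = Δ l k)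
    (μ : ℂ) (a : Fin N → ℂ) (ha : (Δ.map (Complex.ofReal)).mulVec a = μ • a)
    (haS : ∀ i ∈ S, a i = 0) : a = 0 := by
  by_cases ha0 : a = 0
  · exact ha0
  -- μ is real
  have hs : (0:ℝ) < ∑ i, Complex.normSq (a i) := by
    obtain ⟨j, hj⟩ := Function.ne_iff.1 ha0
    exact Finset.sum_pos' (fun i _ => Complex.normSq_nonneg _)
      ⟨j, Finset.mem_univ j, by simpa [Complex.normSq_pos] using hj⟩
  have hq : ∀ i, (starRingEnd ℂ) (a i) * ((Δ.map Complex.ofReal).mulVec a i)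
      = ∑ j, (Δ i j : ℂ) * ((starRingEnd ℂ) (a i) * a j) := by
    intro i
    simp [Matrix.mulVec, dotProduct, Finset.mul_sum, Matrix.map_apply]
    exact Finset.sum_congr rfl fun j _ => by ring
  have hqs : (∑ i, (starRingEnd ℂ) (a i) * ((Δ.map Complex.ofReal).mulVec a i))
      = μ * (∑ i, Complex.normSq (a i) : ℝ) := by
    rw [ha]
    push_cast
    simp only [Pi.smul_apply, smul_eq_mul, Finset.mul_sum]
    congr 1; funext i
    rw [Complex.normSq_eq_conj_mul_self]
    ring
  have hconj : (starRingEnd ℂ) (∑ i, (starRingEnd ℂ) (a i) * ((Δ.map Complex.ofReal).mulVec a i))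
      = ∑ i, (starRingEnd ℂ) (a i) * ((Δ.map Complex.ofReal).mulVec a i) := by
    simp only [hq, map_sum, map_mul, Finset.mul_sum]
    rw [Finset.sum_comm]
    refine Finset.sum_congr rfl fun i _ => Finset.sum_congr rfl fun j _ => ?_
    simp only [Complex.conj_conj, Complex.conj_ofReal, hsymm i j]
    ring
  have hμre : μ = (μ.re : ℂ) := by
    have h1 : (starRingEnd ℂ) μ * (∑ i, Complex.normSq (a i) : ℝ)
        = μ * (∑ i, Complex.normSq (a i) : ℝ) := by
      have := congrArg (starRingEnd ℂ) hqs
      rw [hconj, hqs] at this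
      simpa [Complex.conj_ofReal] using this.symm
    have hsne : ((∑ i, Complex.normSq (a i) : ℝ) : ℂ) ≠ 0 := by
      exact_mod_cast ne_of_gt hs
    have := mul_right_cancel₀ hsne h1
    exact (Complex.conj_eq_iff_re.1 this).symm
  -- real and imaginary parts are real eigenvectors
  have hre : Δ.mulVec (fun i => (a i).re) = μ.re • (fun i => (a i).re) := by
    funext i
    have := congrFun ha i
    have hre := congrArg Complex.re this
    rw [hμre] at hre
    simpa [Matrix.mulVec, dotProduct, Complex.re_sum, Matrix.map_apply,
      Complex.mul_re] using hre
  have him : Δ.mulVec (fun i => (a i).im) = μ.re • (fun i => (a i).im) := by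
    funext i
    have := congrFun ha i
    have him := congrArg Complex.im this
    rw [hμre] at him
    simpa [Matrix.mulVec, dotProduct, Complex.im_sum, Matrix.map_apply,
      Complex.mul_im] using him
  have hre0 : (fun i => (a i).re) = 0 :=
    strategic_eigen_zero hS μ.re _ (Module.End.mem_eigenspace_iff.2
      (by rw [Matrix.toLin'_apply]; exact hre)) (fun i hi => by rw [haS i hi]; simp)
  have him0 : (fun i => (a i).im) = 0 :=
    strategic_eigen_zero hS μ.re _ (Module.End.mem_eigenspace_iff.2
      (by rw [Matrix.toLin'_apply]; exact him)) (fun i hi => by rw [haS i hi]; simp)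
  funext i
  exact Complex.ext (congrFun hre0 i) (congrFun him0 i)

/-- If `X` is a twice continuously differentiable solution of
`X'' + η X' - Δ X = 0` on `[0, T⁰]` whose components vanish on a strategic set `S`
throughout `[0, T⁰]`, then `X(0) = 0` and `X'(0) = 0` (hence `X ≡ 0` on `[0, T⁰]`). -/
theorem strategic_observation_determines_initial_conditions
    {N : ℕ} (G : SimpleGraph (Fin N)) [DecidableRel G.Adj]
    (η T0 : ℝ) (hη : 0 < η) (hT0 : 0 < T0)
    (S : Finset (Fin N)) (hS : Strategic (graphLaplacian G) S)
    (X X' X'' : ℝ → (Fin N → ℝ))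
    (hX : ∀ t ∈ Set.Icc (0:ℝ) T0, HasDerivWithinAt X (X' t) (Set.Icc (0:ℝ) T0) t)
    (hX' : ∀ t ∈ Set.Icc (0:ℝ) T0, HasDerivWithinAt X' (X'' t) (Set.Icc (0:ℝ) T0) t)
    (hX'' : ContinuousOn X'' (Set.Icc (0:ℝ) T0))
    (hODE : ∀ t ∈ Set.Icc (0:ℝ) T0,
      X'' t + η • X' t - (graphLaplacian G).mulVec (X t) = 0)
    (hobs : ∀ n ∈ S, ∀ t ∈ Set.Icc (0:ℝ) T0, X t n = 0) :
    X 0 = 0 ∧ X' 0 = 0 ∧ ∀ t ∈ Set.Icc (0:ℝ) T0, X t = 0 := by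
  set Δ : Matrix (Fin N) (Fin N) ℝ := graphLaplacian G with hΔ
  have hsymm : ∀ k l, Δ k l = Δ l k := by
    intro k l
    by_cases h : k = l
    · simp [hΔ, graphLaplacian, h]
    · have hiff : G.Adj k l ↔ G.Adj l k := G.adj_comm k l
      simp only [hΔ, graphLaplacian, Matrix.of_apply, if_neg h, if_neg (Ne.symm h)]
      simp [hiff]
  -- the first-order system
  let L : ((Fin N → ℝ) × (Fin N → ℝ)) →ₗ[ℝ] ((Fin N → ℝ) × (Fin N → ℝ)) :=
    (LinearMap.snd ℝ _ _).prod
      (Δ.mulVecLin.comp (LinearMap.fst ℝ _ _) - η • LinearMap.snd ℝ _ _)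
  have hLapp : ∀ p : (Fin N → ℝ) × (Fin N → ℝ), L p = (p.2, Δ.mulVec p.1 - η • p.2) :=
    fun p => rfl
  set u : ℝ → (Fin N → ℝ) × (Fin N → ℝ) := fun t => (X t, X' t) with hudef
  have hODE' : ∀ t ∈ Set.Icc (0:ℝ) T0, X'' t = Δ.mulVec (X t) - η • X' t := by
    intro t ht
    have h := hODE t ht
    rw [sub_eq_zero] at h
    rw [eq_sub_iff_add_eq, h]
  have hu' : ∀ t ∈ Set.Icc (0:ℝ) T0, HasDerivWithinAt u (L (u t)) (Set.Icc (0:ℝ) T0) t := by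
    intro t ht
    have h := (hX t ht).prodMk (hX' t ht)
    rw [hLapp]
    simpa [hudef, hODE' t ht] using h
  -- all "derivatives" of the observed coordinates vanish on [0,T0]
  have hzero : ∀ k : ℕ, ∀ t ∈ Set.Icc (0:ℝ) T0, ∀ i ∈ S, ((L^k) (u t)).1 i = 0 := by
    intro k
    induction k with
    | zero => intro t ht i hi; simpa using hobs i hi t ht
    | succ k ih =>
      intro t ht i hi
      let e : ((Fin N → ℝ) × (Fin N → ℝ)) →ₗ[ℝ] ℝ :=
        (LinearMap.proj i).comp (LinearMap.fst ℝ _ _)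
      let M := (e.comp (L^k)).toContinuousLinearMap
      have hd : HasDerivWithinAt (fun τ => M (u τ)) (M (L (u t))) (Set.Icc (0:ℝ) T0) t :=
        M.hasFDerivAt.comp_hasDerivWithinAt t (hu' t ht)
      have hz : HasDerivWithinAt (fun τ => M (u τ)) 0 (Set.Icc (0:ℝ) T0) t := by
        refine (hasDerivWithinAt_const t (Set.Icc (0:ℝ) T0) (0:ℝ)).congr ?_ ?_
        · intro τ hτ
          simpa [M, e] using ih τ hτ i hi
        · simpa [M, e] using ih t ht i hi
      have h1 := hd.derivWithin (uniqueDiffOn_Icc hT0 t ht)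
      have h2 := hz.derivWithin (uniqueDiffOn_Icc hT0 t ht)
      have h3 : M (L (u t)) = 0 := by rw [← h1, h2]
      have : ((L^k) (L (u t))).1 i = 0 := by simpa [M, e] using h3
      rw [pow_succ, Module.End.mul_apply]
      exact this
  have h00 : (0:ℝ) ∈ Set.Icc (0:ℝ) T0 := Set.mem_Icc.2 ⟨le_refl _, le_of_lt hT0⟩
  have h0 : ∀ k : ℕ, ∀ i ∈ S, ((L^k) (u 0)).1 i = 0 := fun k i hi => hzero k 0 h00 i hi
  -- complexification and observability
  have hu0 : u 0 = 0 := by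
    by_contra hne
    let Δc : Matrix (Fin N) (Fin N) ℂ := Δ.map Complex.ofReal
    let Lc : ((Fin N → ℂ) × (Fin N → ℂ)) →ₗ[ℂ] ((Fin N → ℂ) × (Fin N → ℂ)) :=
      (LinearMap.snd ℂ _ _).prod
        (Δc.mulVecLin.comp (LinearMap.fst ℂ _ _) - (η:ℂ) • LinearMap.snd ℂ _ _)
    have hLcapp : ∀ p : (Fin N → ℂ) × (Fin N → ℂ),
        Lc p = (p.2, Δc.mulVec p.1 - (η:ℂ) • p.2) := fun p => rfl
    let cE : ((Fin N → ℝ) × (Fin N → ℝ)) → ((Fin N → ℂ) × (Fin N → ℂ)) :=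
      fun p => (fun j => (p.1 j : ℂ), fun j => (p.2 j : ℂ))
    have hcomm : ∀ p, Lc (cE p) = cE (L p) := by
      intro p
      rw [hLcapp, hLapp]
      refine Prod.ext rfl ?_
      funext j
      simp only [cE, Pi.sub_apply, Pi.smul_apply, smul_eq_mul]
      push_cast
      simp [Δc, Matrix.mulVec, dotProduct, Matrix.map_apply]
    have hpow : ∀ k : ℕ, (Lc^k) (cE (u 0)) = cE ((L^k) (u 0)) := by
      intro k
      induction k with
      | zero => simp
      | succ k ih => rw [pow_succ', pow_succ', Module.End.mul_apply, Module.End.mul_apply, ih, hcomm]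
    set W : Submodule ℂ ((Fin N → ℂ) × (Fin N → ℂ)) :=
      Submodule.span ℂ (Set.range fun k : ℕ => (Lc^k) (cE (u 0))) with hWdef
    have hWmem0 : cE (u 0) ∈ W := Submodule.subset_span ⟨0, by simp⟩
    have hWinv : ∀ w ∈ W, Lc w ∈ W := by
      intro w hw
      have hle : Submodule.map Lc W ≤ W := by
        rw [hWdef, Submodule.map_span, ← Set.range_comp]
        apply Submodule.span_le.2
        rintro _ ⟨k, rfl⟩
        exact Submodule.subset_span ⟨k+1, by
          simp [Function.comp, pow_succ', Module.End.mul_apply]⟩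
      exact hle (Submodule.mem_map_of_mem hw)
    have hWS : ∀ w ∈ W, ∀ i ∈ S, w.1 i = 0 := by
      intro w hw i hi
      let Z : Submodule ℂ ((Fin N → ℂ) × (Fin N → ℂ)) :=
        ⨅ i ∈ S, LinearMap.ker ((LinearMap.proj i).comp (LinearMap.fst ℂ _ _))
      have hZle : W ≤ Z := by
        apply Submodule.span_le.2
        rintro _ ⟨k, rfl⟩
        rw [SetLike.mem_coe]
        refine (Submodule.mem_iInf _).2 fun i' => (Submodule.mem_iInf _).2 fun hi' => ?_
        rw [LinearMap.mem_ker, LinearMap.comp_apply, LinearMap.fst_apply, LinearMap.proj_apply]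
        show ((Lc ^ k) (cE (u 0))).1 i' = 0
        rw [hpow k]
        have := h0 k i' hi'
        simp only [cE]
        exact_mod_cast congrArg (fun r : ℝ => (r:ℂ)) this
      have hmem := hZle hw
      have h1 := (Submodule.mem_iInf _).1 hmem i
      have h2 := (Submodule.mem_iInf _).1 h1 hi
      simpa using h2
    have hcE0 : cE (u 0) ≠ 0 := by
      intro h
      apply hne
      have h1 := congrArg Prod.fst h
      have h2 := congrArg Prod.snd h
      refine Prod.ext ?_ ?_ <;> funext j
      · have := congrFun h1 j
        simpa [cE, Complex.ofReal_eq_zero] using this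
      · have := congrFun h2 j
        simpa [cE, Complex.ofReal_eq_zero] using this
    haveI : Nontrivial W := nontrivial_of_ne ⟨cE (u 0), hWmem0⟩ 0 (by
      simp only [ne_eq, Submodule.mk_eq_zero]
      exact hcE0)
    let f : Module.End ℂ W := Lc.restrict hWinv
    obtain ⟨lam, hlam⟩ := Module.End.exists_eigenvalue f
    obtain ⟨w, hwe⟩ := hlam.exists_hasEigenvector
    have hfw : Lc (w : (Fin N → ℂ) × (Fin N → ℂ)) = lam • (w : (Fin N → ℂ) × (Fin N → ℂ)) := by
      have := Module.End.mem_eigenspace_iff.1 hwe.1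
      have h2 := congrArg (Submodule.subtype W) this
      simpa [f, LinearMap.restrict_apply] using h2
    set a : Fin N → ℂ := (w : (Fin N → ℂ) × (Fin N → ℂ)).1 with hadef
    set b : Fin N → ℂ := (w : (Fin N → ℂ) × (Fin N → ℂ)).2 with hbdef
    rw [hLcapp] at hfw
    have hb : b = lam • a := congrArg Prod.fst hfw
    have hsec : Δc.mulVec a - (η:ℂ) • b = lam • b := congrArg Prod.snd hfw
    have heig : Δc.mulVec a = (lam^2 + η*lam) • a := by
      rw [hb] at hsec
      rw [sub_eq_iff_eq_add] at hsec
      rw [hsec, smul_smul, smul_smul, ← add_smul]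
      ring_nf
    have haS : ∀ i ∈ S, a i = 0 := fun i hi => hWS _ w.2 i hi
    have ha0 : a = 0 := complex_eigen_zero hS hsymm _ a heig haS
    have hb0 : b = 0 := by rw [hb, ha0, smul_zero]
    exact hwe.2 (by
      apply Subtype.ext
      exact Prod.ext ha0 hb0)
  have hX0 : X 0 = 0 := congrArg Prod.fst hu0
  have hX'0 : X' 0 = 0 := congrArg Prod.snd hu0
  refine ⟨hX0, hX'0, ?_⟩
  -- uniqueness of the ODE solution
  let Lcont := L.toContinuousLinearMap
  have key : Set.EqOn u (fun _ => (0 : (Fin N → ℝ) × (Fin N → ℝ))) (Set.Icc 0 T0) := by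
    apply ODE_solution_unique (v := fun _ x => Lcont x) (K := ‖Lcont‖₊)
      (fun _ => Lcont.lipschitz)
    · exact fun t ht => (hu' t ht).continuousWithinAt
    · intro t ht
      have := (hu' t (Set.Ico_subset_Icc_self ht)).mono_of_mem_nhdsWithin
        (Icc_mem_nhdsGE_of_mem ht)
      exact this
    · exact continuousOn_const
    · intro t ht
      simpa using hasDerivWithinAt_const t (Set.Ici t) (0 : (Fin N → ℝ) × (Fin N → ℝ))
    · exact hu0
  intro t ht
  have := key ht
  exact congrArg Prod.fst this
end

section
/- Let G be a finite simple graph on vertex set V = {1,…,N} with graph Laplacian Δ, let η > 0 and T⁰ > 0, let S ⊆ V be a strategic set, and let F : [0,T⁰] → ℝ^N be continuous. If X¹ and X² are twice continuously differentiable functions [0,T⁰] → ℝ^N each satisfying X''(t) + η X'(t) − Δ X(t) = F(t) for all t ∈ [0,T⁰], and if x¹_n(t) = x²_n(t) for all t ∈ [0,T⁰] and every n ∈ S, then X¹(t) = X²(t) for all t ∈ [0,T⁰]; in particular the initial conditions coincide: X¹(0) = X²(0) and (X¹)'(0) = (X²)'(0). -/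
section Auxiliary

/-- The graph Laplacian is a symmetric (hermitian) real matrix. -/
lemma graphLaplacian_isHermitian {N : ℕ} (G : SimpleGraph (Fin N)) [DecidableRel G.Adj] :
    (graphLaplacian G).IsHermitian := by
  rw [Matrix.IsHermitian]
  ext k l
  simp only [Matrix.conjTranspose_apply, graphLaplacian, Matrix.of_apply, star_trivial]
  by_cases h : k = l
  · subst h; simp
  · have h' : ¬ l = k := fun e => h e.symm
    simp [h, h', G.adj_comm k l]

/-- If `S` is strategic, any eigenvector of the Laplacian vanishing on `S` is zero. -/
lemma strategic_eig_eq_zero {N : ℕ} {A : Matrix (Fin N) (Fin N) ℝ} {S : Finset (Fin N)}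
    (hS : Strategic A S) (μ : ℝ) (w : Fin N → ℝ)
    (hw : w ∈ Module.End.eigenspace (Matrix.toLin' A) μ)
    (h0 : ∀ n ∈ S, w n = 0) : w = 0 := by
  set E := Module.End.eigenspace (Matrix.toLin' A) μ with hE
  have : Module.Finite ℝ E := inferInstance
  set m := Module.finrank ℝ E with hm
  let b : Module.Basis (Fin m) ℝ E := Module.finBasis ℝ E
  let v : Fin m → (Fin N → ℝ) := fun q => (b q : Fin N → ℝ)
  have hmem : ∀ q, v q ∈ E := fun q => (b q).2
  have hli : LinearIndependent ℝ v := by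
    have := b.linearIndependent
    exact this.map' E.subtype (Submodule.ker_subtype E)
  have hspan : Submodule.span ℝ (Set.range v) = E := by
    have : Set.range v = E.subtype '' Set.range b := by
      ext x; simp [v, Set.range_comp]
    rw [this, ← Submodule.map_span, b.span_eq, Submodule.map_top, Submodule.range_subtype]
  obtain ⟨i, hiS, hU⟩ := hS μ m v hmem hli hspan
  set c : Fin m → ℝ := fun q => b.repr ⟨w, hw⟩ q with hc
  have hwsum : ∀ n, w n = ∑ q, c q * v q n := by
    intro n
    have := b.sum_repr ⟨w, hw⟩
    have := congrArg (fun (x : E) => (x : Fin N → ℝ) n) this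
    simp only [Submodule.coe_sum, Submodule.coe_smul, Finset.sum_apply, Pi.smul_apply,
      smul_eq_mul] at this
    exact this.symm
  have hc0 : (Matrix.of fun p q : Fin m => v q (i p)).mulVec c = 0 := by
    funext p
    simp only [Matrix.mulVec, dotProduct, Matrix.of_apply, Pi.zero_apply]
    rw [Finset.sum_congr rfl (fun x _ => mul_comm (v x (i p)) (c x)), ← hwsum (i p)]
    exact h0 (i p) (hiS p)
  have hcz : c = 0 := by
    have hinj := Matrix.mulVec_injective_iff_isUnit.mpr hU
    have : (Matrix.of fun p q : Fin m => v q (i p)).mulVec c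
        = (Matrix.of fun p q : Fin m => v q (i p)).mulVec 0 := by simp [hc0]
    exact hinj this
  have : (⟨w, hw⟩ : E) = 0 := by
    have : b.repr ⟨w, hw⟩ = 0 := by
      ext q; exact congrFun hcz q
    simpa using (b.repr.map_eq_zero_iff).1 this
  exact congrArg Subtype.val this

lemma sum_mulVec' {N : ℕ} {ι : Type*} (s : Finset ι) (f : ι → Matrix (Fin N) (Fin N) ℝ)
    (x : Fin N → ℝ) : (∑ i ∈ s, f i).mulVec x = ∑ i ∈ s, (f i).mulVec x := by
  classical
  induction s using Finset.induction_on with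
  | empty => simp [Matrix.zero_mulVec]
  | insert a s h ih => simp [Finset.sum_insert h, Matrix.add_mulVec, ih]

open Polynomial in
lemma aeval_mulVec_eig {N : ℕ} (A : Matrix (Fin N) (Fin N) ℝ) (u : Fin N → ℝ) (μ : ℝ)
    (hu : A.mulVec u = μ • u) (p : ℝ[X]) :
    (aeval A p).mulVec u = p.eval μ • u := by
  induction p using Polynomial.induction_on' with
  | add p q hp hq => simp [map_add, Matrix.add_mulVec, hp, hq, add_smul]
  | monomial n a =>
    have hpow : ∀ k : ℕ, (A ^ k).mulVec u = μ ^ k • u := by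
      intro k
      induction k with
      | zero => simp
      | succ k ih =>
        rw [pow_succ, ← Matrix.mulVec_mulVec, hu, Matrix.mulVec_smul, ih, smul_smul,
          pow_succ, mul_comm]
    rw [aeval_monomial, Algebra.algebraMap_eq_smul_one, smul_mul_assoc, one_mul,
      Matrix.smul_mulVec, hpow, eval_monomial, smul_smul]

open Polynomial in
/-- If all vectors `A^k w` vanish on `S` and any eigenvector of the symmetric matrix `A`
vanishing on `S` is zero, then `w = 0`.  (Spectral decomposition + Lagrange interpolation.) -/
lemma vanish_all_pows_eq_zero {N : ℕ} {A : Matrix (Fin N) (Fin N) ℝ} {S : Finset (Fin N)}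
    (hA : A.IsHermitian)
    (hstr : ∀ (μ : ℝ) (w : Fin N → ℝ),
      w ∈ Module.End.eigenspace (Matrix.toLin' A) μ → (∀ n ∈ S, w n = 0) → w = 0)
    (w : Fin N → ℝ) (hw : ∀ (k : ℕ), ∀ n ∈ S, ((A ^ k).mulVec w) n = 0) : w = 0 := by
  classical
  set b := hA.eigenvectorBasis with hb
  set μ := hA.eigenvalues with hμ
  set W : EuclideanSpace ℝ (Fin N) := WithLp.toLp 2 w with hW
  set c : Fin N → ℝ := fun j => inner (𝕜 := ℝ) (b j) W with hc
  have hrepr : ∑ j, c j • (b j) = W := b.sum_repr' W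
  suffices hcz : ∀ j, c j = 0 by
    have : W = 0 := by rw [← hrepr]; simp [hcz]
    have := congrArg WithLp.ofLp this
    simpa [hW] using this
  intro i₀
  set s : Finset ℝ := Finset.univ.image μ with hs
  set p : ℝ[X] := Lagrange.basis s id (μ i₀) with hp
  have hμi₀ : μ i₀ ∈ s := Finset.mem_image_of_mem μ (Finset.mem_univ i₀)
  have hinj : Set.InjOn (id : ℝ → ℝ) s := Function.injective_id.injOn
  have heval : ∀ j, p.eval (μ j) = if μ j = μ i₀ then 1 else 0 := by
    intro j
    by_cases h : μ j = μ i₀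
    · rw [h, if_pos rfl]
      simpa using Lagrange.eval_basis_self hinj hμi₀
    · rw [if_neg h]
      have := Lagrange.eval_basis_of_ne (s := s) (v := id) (i := μ i₀) (j := μ j)
        (fun he => h he.symm) (Finset.mem_image_of_mem μ (Finset.mem_univ j))
      simpa using this
  have heig : ∀ j, A.mulVec ⇑(b j) = μ j • ⇑(b j) := hA.mulVec_eigenvectorBasis
  set wp : Fin N → ℝ := (aeval A p).mulVec w with hwp
  have h1 : wp = ∑ j, (p.eval (μ j) * c j) • ⇑(b j) := by
    have hw' : w = ∑ j, c j • ⇑(b j) := by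
      have h := congrArg (WithLp.linearEquiv 2 ℝ (∀ _ : Fin N, ℝ)) hrepr
      simpa [map_sum, map_smul] using h.symm
    rw [hwp, hw', ← Matrix.mulVecLin_apply, map_sum]
    refine Finset.sum_congr rfl fun j _ => ?_
    rw [map_smul, Matrix.mulVecLin_apply, aeval_mulVec_eig A (⇑(b j)) (μ j) (heig j) p,
      smul_smul, mul_comm]
  have h2 : ∀ n ∈ S, wp n = 0 := by
    intro n hn
    rw [hwp, aeval_eq_sum_range, sum_mulVec']
    simp only [Finset.sum_apply]
    refine Finset.sum_eq_zero fun k _ => ?_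
    rw [Matrix.smul_mulVec]
    simp [hw k n hn]
  have h3 : wp ∈ Module.End.eigenspace (Matrix.toLin' A) (μ i₀) := by
    rw [h1]
    refine Submodule.sum_mem _ fun j _ => ?_
    by_cases h : μ j = μ i₀
    · rw [Module.End.mem_eigenspace_iff]
      rw [Matrix.toLin'_apply, Matrix.mulVec_smul, heig j, h, smul_comm]
    · rw [heval j, if_neg h]
      simp
  have h4 : wp = 0 := hstr (μ i₀) wp h3 h2
  have h5 : (0 : ℝ) = inner (𝕜 := ℝ) (b i₀)
      ((∑ j, (p.eval (μ j) * c j) • (b j) : EuclideanSpace ℝ (Fin N))) := by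
    have : (∑ j, (p.eval (μ j) * c j) • (b j) : EuclideanSpace ℝ (Fin N))
        = (0 : EuclideanSpace ℝ (Fin N)) := by
      have := h1.symm.trans h4
      exact WithLp.ofLp_injective _ (by simpa using this)
    rw [this, inner_zero_right]
  rw [inner_sum] at h5
  simp only [real_inner_smul_right] at h5
  have horth := b.orthonormal
  rw [orthonormal_iff_ite] at horth
  rw [Finset.sum_congr rfl (fun j _ => by rw [horth i₀ j])] at h5
  simp only [mul_ite, mul_one, mul_zero] at h5
  rw [Finset.sum_ite_eq Finset.univ i₀ (fun j => p.eval (μ j) * c j)] at h5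
  simp only [Finset.mem_univ, if_true, heval i₀, if_pos rfl, one_mul] at h5
  exact h5.symm

lemma hasDerivWithinAt_mulVec_comp {N : ℕ} (M : Matrix (Fin N) (Fin N) ℝ)
    {Y : ℝ → Fin N → ℝ} {d : Fin N → ℝ} {s : Set ℝ} {t : ℝ}
    (h : HasDerivWithinAt Y d s t) (n : Fin N) :
    HasDerivWithinAt (fun u => (M.mulVec (Y u)) n) ((M.mulVec d) n) s t := by
  let L : (Fin N → ℝ) →L[ℝ] ℝ :=
    (ContinuousLinearMap.proj n).comp (LinearMap.toContinuousLinearMap M.mulVecLin)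
  exact (L.hasFDerivAt.comp_hasDerivWithinAt t h : _)

lemma zero_deriv_of_eqOn {T0 : ℝ} (hT0 : 0 < T0) {g : ℝ → ℝ} {d t : ℝ}
    (ht : t ∈ Set.Icc (0:ℝ) T0) (hg : ∀ u ∈ Set.Icc (0:ℝ) T0, g u = 0)
    (h : HasDerivWithinAt g d (Set.Icc (0:ℝ) T0) t) : d = 0 := by
  have h2 : HasDerivWithinAt (fun _ : ℝ => (0:ℝ)) d (Set.Icc (0:ℝ) T0) t :=
    h.congr (fun u hu => (hg u hu).symm) (hg t ht).symm
  have h3 := h2.derivWithin ((uniqueDiffOn_Icc hT0) t ht)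
  rw [← h3]
  exact congrFun (derivWithin_const _ _) t

end Auxiliary

/-- Two twice continuously differentiable solutions of the forced damped graph wave equation
`X'' + η X' - Δ X = F` on `[0, T⁰]` that agree on a strategic set `S` throughout `[0, T⁰]`
agree everywhere on `[0, T⁰]`; in particular their initial conditions coincide. -/
theorem strategic_observation_uniqueness
    {N : ℕ} (G : SimpleGraph (Fin N)) [DecidableRel G.Adj]
    (η T0 : ℝ) (hη : 0 < η) (hT0 : 0 < T0)
    (S : Finset (Fin N)) (hS : Strategic (graphLaplacian G) S)
    (F : ℝ → (Fin N → ℝ)) (hF : ContinuousOn F (Set.Icc (0:ℝ) T0))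
    (X₁ X₁' X₁'' X₂ X₂' X₂'' : ℝ → (Fin N → ℝ))
    (hX₁ : ∀ t ∈ Set.Icc (0:ℝ) T0, HasDerivWithinAt X₁ (X₁' t) (Set.Icc (0:ℝ) T0) t)
    (hX₁' : ∀ t ∈ Set.Icc (0:ℝ) T0, HasDerivWithinAt X₁' (X₁'' t) (Set.Icc (0:ℝ) T0) t)
    (hX₁'' : ContinuousOn X₁'' (Set.Icc (0:ℝ) T0))
    (hX₂ : ∀ t ∈ Set.Icc (0:ℝ) T0, HasDerivWithinAt X₂ (X₂' t) (Set.Icc (0:ℝ) T0) t)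
    (hX₂' : ∀ t ∈ Set.Icc (0:ℝ) T0, HasDerivWithinAt X₂' (X₂'' t) (Set.Icc (0:ℝ) T0) t)
    (hX₂'' : ContinuousOn X₂'' (Set.Icc (0:ℝ) T0))
    (hODE₁ : ∀ t ∈ Set.Icc (0:ℝ) T0,
      X₁'' t + η • X₁' t - (graphLaplacian G).mulVec (X₁ t) = F t)
    (hODE₂ : ∀ t ∈ Set.Icc (0:ℝ) T0,
      X₂'' t + η • X₂' t - (graphLaplacian G).mulVec (X₂ t) = F t)
    (hobs : ∀ n ∈ S, ∀ t ∈ Set.Icc (0:ℝ) T0, X₁ t n = X₂ t n) :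
    (∀ t ∈ Set.Icc (0:ℝ) T0, X₁ t = X₂ t) ∧ X₁ 0 = X₂ 0 ∧ X₁' 0 = X₂' 0 := by
  set A := graphLaplacian G with hAdef
  have hA : A.IsHermitian := graphLaplacian_isHermitian G
  set Y : ℝ → Fin N → ℝ := fun t => X₁ t - X₂ t with hYdef
  set Y' : ℝ → Fin N → ℝ := fun t => X₁' t - X₂' t with hY'def
  set Y'' : ℝ → Fin N → ℝ := fun t => X₁'' t - X₂'' t with hY''def
  have hY : ∀ t ∈ Set.Icc (0:ℝ) T0, HasDerivWithinAt Y (Y' t) (Set.Icc (0:ℝ) T0) t :=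
    fun t ht => (hX₁ t ht).sub (hX₂ t ht)
  have hY' : ∀ t ∈ Set.Icc (0:ℝ) T0, HasDerivWithinAt Y' (Y'' t) (Set.Icc (0:ℝ) T0) t :=
    fun t ht => (hX₁' t ht).sub (hX₂' t ht)
  have hAY : ∀ t ∈ Set.Icc (0:ℝ) T0, A.mulVec (Y t) = Y'' t + η • Y' t := by
    intro t ht
    have h1 := hODE₁ t ht
    have h2 := hODE₂ t ht
    have key : Y'' t + η • Y' t - A.mulVec (Y t)
        = (X₁'' t + η • X₁' t - A.mulVec (X₁ t)) - (X₂'' t + η • X₂' t - A.mulVec (X₂ t)) := by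
      simp only [hYdef, hY'def, hY''def, Matrix.mulVec_sub, smul_sub]
      abel
    have : Y'' t + η • Y' t - A.mulVec (Y t) = 0 := by
      rw [key, h1, h2, sub_self]
    have := eq_of_sub_eq_zero this
    exact this.symm
  have main : ∀ k : ℕ, ∀ n ∈ S, ∀ t ∈ Set.Icc (0:ℝ) T0, ((A ^ k).mulVec (Y t)) n = 0 := by
    intro k
    induction k with
    | zero =>
      intro n hn t ht
      simp only [pow_zero, Matrix.one_mulVec, hYdef, Pi.sub_apply]
      rw [hobs n hn t ht, sub_self]
    | succ k ih =>
      intro n hn t ht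
      have hd1 : ∀ u ∈ Set.Icc (0:ℝ) T0, ((A ^ k).mulVec (Y' u)) n = 0 := by
        intro u hu
        exact zero_deriv_of_eqOn hT0 hu (fun r hr => ih n hn r hr)
          (hasDerivWithinAt_mulVec_comp _ (hY u hu) n)
      have hd2 : ∀ u ∈ Set.Icc (0:ℝ) T0, ((A ^ k).mulVec (Y'' u)) n = 0 := by
        intro u hu
        exact zero_deriv_of_eqOn hT0 hu (fun r hr => hd1 r hr)
          (hasDerivWithinAt_mulVec_comp _ (hY' u hu) n)
      have hstep : (A ^ (k+1)).mulVec (Y t)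
          = (A ^ k).mulVec (Y'' t) + η • (A ^ k).mulVec (Y' t) := by
        rw [pow_succ, ← Matrix.mulVec_mulVec, hAY t ht, Matrix.mulVec_add, Matrix.mulVec_smul]
      rw [hstep]
      simp [hd1 t ht, hd2 t ht]
  have hstr := fun μ w hw h0 => strategic_eig_eq_zero hS μ w hw h0
  have hzero : ∀ t ∈ Set.Icc (0:ℝ) T0, Y t = 0 := fun t ht =>
    vanish_all_pows_eq_zero hA hstr (Y t) (fun k n hn => main k n hn t ht)
  have h0mem : (0:ℝ) ∈ Set.Icc (0:ℝ) T0 := ⟨le_refl 0, hT0.le⟩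
  refine ⟨fun t ht => sub_eq_zero.mp (hzero t ht), sub_eq_zero.mp (hzero 0 h0mem), ?_⟩
  have hY'0 : Y' 0 = 0 := by
    funext n
    have hobs1 : ∀ u ∈ Set.Icc (0:ℝ) T0, ((1 : Matrix (Fin N) (Fin N) ℝ).mulVec (Y u)) n = 0 := by
      intro u hu
      rw [Matrix.one_mulVec, hzero u hu]
      rfl
    have := zero_deriv_of_eqOn hT0 h0mem hobs1
      (hasDerivWithinAt_mulVec_comp (1 : Matrix (Fin N) (Fin N) ℝ) (hY 0 h0mem) n)
    rwa [Matrix.one_mulVec] at this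
  exact sub_eq_zero.mp hY'0
end

section
/- Let G be a finite simple graph on vertex set V with graph Laplacian Δ, and suppose j ∈ V is a joint: V ∖ {j} is partitioned into two nonempty sets B (the big set) and C (the small set) such that no edge of G joins a vertex of B to a vertex of C. If the observation set satisfies S ⊆ B and E = V ∖ S, then for every c ∈ C the column of Δ(S;E) indexed by c is zero; consequently Δ(S;E) does not have full column rank, i.e. rank Δ(S;E) < |E|. -/
open Finset Matrix

theorem Matrix.rank_lt_card_width_of_col_eq_zero {m n K : Type*} [Field K] [Fintype m]
    [Fintype n] [DecidableEq n] (A : Matrix m n K) (c : n) (hc : ∀ i, A i c = 0) :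
    A.rank < Fintype.card n := by
  have hsupport : Function.support Aᵀ.row ⊆ ↑(univ.erase c) := by
    intro i hi
    simp only [coe_erase, coe_univ, Set.mem_sdiff, Set.mem_univ, Set.mem_singleton_iff,
      true_and]
    rintro rfl
    exact hi (funext hc)
  rw [← A.rank_transpose]
  calc Aᵀ.rank ≤ (univ.erase c).card := Aᵀ.rank_le_card_of_support_subset _ hsupport
    _ < Fintype.card n := card_erase_lt_of_mem (mem_univ c)

theorem graphLaplacian_apply_of_ne_of_not_adj {N : ℕ} (G : SimpleGraph (Fin N))
    [DecidableRel G.Adj] {k l : Fin N} (hne : k ≠ l) (hadj : ¬G.Adj k l) :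
    graphLaplacian G k l = 0 := by
  simp [graphLaplacian, hne, hadj]

theorem joint_obstructs_full_rank_general
    {N : ℕ} (G : SimpleGraph (Fin N)) [DecidableRel G.Adj]
    (B C : Finset (Fin N))
    (hdisj : Disjoint B C)
    (hCne : C.Nonempty)
    (hnoedge : ∀ b ∈ B, ∀ c ∈ C, ¬ G.Adj b c)
    (S : Finset (Fin N)) (hSB : S ⊆ B) :
    (∀ c ∈ C, ∀ s ∈ S, graphLaplacian G s c = 0) ∧
    ((graphLaplacian G).submatrix
        (fun s : {x // x ∈ S} => (s : Fin N))
        (fun e : {x // x ∈ Sᶜ} => (e : Fin N))).rank < Sᶜ.card := by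
  have hCS : ∀ c ∈ C, c ∉ S := fun c hc hcS => disjoint_left.mp hdisj (hSB hcS) hc
  have hcol : ∀ c ∈ C, ∀ s ∈ S, graphLaplacian G s c = 0 := fun c hc s hs =>
    graphLaplacian_apply_of_ne_of_not_adj G (fun h => hCS c hc (h ▸ hs)) (hnoedge s (hSB hs) c hc)
  refine ⟨hcol, ?_⟩
  obtain ⟨c, hc⟩ := hCne
  simpa only [Fintype.card_coe] using rank_lt_card_width_of_col_eq_zero
    ((graphLaplacian G).submatrix (fun s : {x // x ∈ S} => (s : Fin N))
      (fun e : {x // x ∈ Sᶜ} => (e : Fin N)))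
    ⟨c, mem_compl.2 (hCS c hc)⟩ fun s => hcol c hc s s.2

/-- If `j` is a joint vertex whose removal splits the remaining vertices into two nonempty
sets `B` and `C` with no edges between them, and all observation vertices are taken from the
big set `B` (`S ⊆ B`, `E = V \ S`), then every column of `Δ(S;E)` indexed by a vertex of `C`
is zero; consequently `Δ(S;E)` does not have full column rank. -/
theorem joint_obstructs_full_rank
    {N : ℕ} (G : SimpleGraph (Fin N)) [DecidableRel G.Adj]
    (j : Fin N) (B C : Finset (Fin N))
    (hBC : B ∪ C = Finset.univ \ {j}) (hdisj : Disjoint B C)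
    (hBne : B.Nonempty) (hCne : C.Nonempty)
    (hnoedge : ∀ b ∈ B, ∀ c ∈ C, ¬ G.Adj b c)
    (S : Finset (Fin N)) (hSB : S ⊆ B) :
    (∀ c ∈ C, ∀ s ∈ S, graphLaplacian G s c = 0) ∧
    ((graphLaplacian G).submatrix
        (fun s : {x // x ∈ S} => (s : Fin N))
        (fun e : {x // x ∈ Sᶜ} => (e : Fin N))).rank < Sᶜ.card :=
  joint_obstructs_full_rank_general G B C hdisj hCne hnoedge S hSB
end

section
/- Let G be a finite simple graph on vertex set V = {1,…,N} with graph Laplacian Δ, let η > 0 and 0 < T⁰ < T, and let S ⊆ V be both strategic and dominantly absorbent, with E = V ∖ S. Let F^{sour} : [0,T] → ℝ^N be continuous, and for i = 1,2 let F^{dis,i} : [0,T] → ℝ^N be continuous with F^{dis,i}(t) = 0 for all t ∈ [0,T⁰] and with component (F^{dis,i})_n(t) = 0 for every n ∈ S and all t ∈ [0,T]. Let X^{(i)} : [0,T] → ℝ^N be twice continuously differentiable and satisfy (X^{(i)})''(t) + η (X^{(i)})'(t) − Δ X^{(i)}(t) = F^{sour}(t) + F^{dis,i}(t) for all t ∈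 [0,T]. If x^{(1)}_n(t) = x^{(2)}_n(t) for all t ∈ [0,T] and every n ∈ S, then F^{dis,1}(t) = F^{dis,2}(t) for all t ∈ [0,T]. -/
open Matrix

theorem Matrix.mulVec_injective_of_rank_eq_card {K m n : Type*} [Field K] [Fintype m]
    [Fintype n] {M : Matrix m n K} (h : M.rank = Fintype.card n) :
    Function.Injective M.mulVec :=
  Matrix.mulVec_injective_iff.mpr <| linearIndependent_iff_card_eq_finrank_span.mpr <| by
    rw [Set.finrank, ← Matrix.rank_eq_finrank_span_cols, h]

theorem Matrix.eq_zero_of_mulVec_apply_eq_zero {K ι : Type*} [Field K] [Fintype ι]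
    [DecidableEq ι] {Δ : Matrix ι ι K} {S : Finset ι}
    (hΔ : Function.Injective
      (Δ.submatrix (fun s : {x // x ∈ S} => (s : ι)) (fun e : {x // x ∈ Sᶜ} => (e : ι))).mulVec)
    {y : ι → K} (hy : ∀ i ∈ S, y i = 0) (hΔy : ∀ i ∈ S, (Δ *ᵥ y) i = 0) : y = 0 := by
  have hblock : (Δ.submatrix (fun s : {x // x ∈ S} => (s : ι))
      (fun e : {x // x ∈ Sᶜ} => (e : ι))) *ᵥ (fun e => y e) = 0 := by
    funext p
    calc _ = ∑ l ∈ Sᶜ, Δ p l * y l := Finset.sum_coe_sort Sᶜ fun l => Δ p l * y l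
      _ = ∑ l, Δ p l * y l := Finset.sum_subset (Finset.subset_univ _) fun l _ hl => by
          rw [hy l (by simpa using hl), mul_zero]
      _ = 0 := hΔy p p.2
  funext l
  by_cases hl : l ∈ S
  · exact hy l hl
  · exact congrFun (hΔ (hblock.trans (mulVec_zero _).symm)) ⟨l, by simpa using hl⟩

theorem UniqueDiffOn.apply_eq_zero_of_hasDerivWithinAt {𝕜 ι F : Type*}
    [NontriviallyNormedField 𝕜] [NormedAddCommGroup F] [NormedSpace 𝕜 F] [Fintype ι]
    {Y Y' : 𝕜 → ι → F} {s : Set 𝕜} (hs : UniqueDiffOn 𝕜 s)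
    (hY : ∀ t ∈ s, HasDerivWithinAt Y (Y' t) s t) {i : ι} (h : ∀ t ∈ s, Y t i = 0) :
    ∀ t ∈ s, Y' t i = 0 := fun t ht =>
  (hs t ht).eq_deriv s (hasDerivWithinAt_pi.mp (hY t ht) i)
    ((hasDerivWithinAt_const t s 0).congr h (h t ht))

theorem dampedWave_forcing_eq_zero_of_apply_eq_zero {ι : Type*} [Fintype ι] [DecidableEq ι]
    {Δ : Matrix ι ι ℝ} {S : Finset ι}
    (hΔ : Function.Injective
      (Δ.submatrix (fun s : {x // x ∈ S} => (s : ι)) (fun e : {x // x ∈ Sᶜ} => (e : ι))).mulVec)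
    {η : ℝ} {s : Set ℝ} (hs : UniqueDiffOn ℝ s) {Y Y' Y'' F : ℝ → ι → ℝ}
    (hY : ∀ t ∈ s, HasDerivWithinAt Y (Y' t) s t) (hY' : ∀ t ∈ s, HasDerivWithinAt Y' (Y'' t) s t)
    (hODE : ∀ t ∈ s, Y'' t + η • Y' t - Δ *ᵥ Y t = F t)
    (hF : ∀ i ∈ S, ∀ t ∈ s, F t i = 0) (hYS : ∀ i ∈ S, ∀ t ∈ s, Y t i = 0) :
    ∀ t ∈ s, F t = 0 := by
  have hY'S i (hi : i ∈ S) := hs.apply_eq_zero_of_hasDerivWithinAt hY (hYS i hi)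
  have hY''S i (hi : i ∈ S) := hs.apply_eq_zero_of_hasDerivWithinAt hY' (hY'S i hi)
  have hY0 : ∀ t ∈ s, Y t = 0 := fun t ht =>
    eq_zero_of_mulVec_apply_eq_zero hΔ (fun i hi => hYS i hi t ht) fun i hi => by
      have hrow := congrFun (hODE t ht) i
      simp only [Pi.add_apply, Pi.sub_apply, Pi.smul_apply, smul_eq_mul, hY''S i hi t ht,
        hY'S i hi t ht, hF i hi t ht] at hrow
      linarith
  have hY'0 t (ht : t ∈ s) : Y' t = 0 := funext fun i =>
    hs.apply_eq_zero_of_hasDerivWithinAt hY (fun t ht => congrFun (hY0 t ht) i) t ht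
  have hY''0 t (ht : t ∈ s) : Y'' t = 0 := funext fun i =>
    hs.apply_eq_zero_of_hasDerivWithinAt hY' (fun t ht => congrFun (hY'0 t ht) i) t ht
  intro t ht
  simpa [hY0 t ht, hY'0 t ht, hY''0 t ht] using (hODE t ht).symm

theorem disturbance_identifiability_general
    {N : ℕ} (G : SimpleGraph (Fin N)) [DecidableRel G.Adj]
    (η T0 T : ℝ) (hT0 : 0 < T0) (hT : T0 < T)
    (S : Finset (Fin N))
    (hdomabs : ((graphLaplacian G).submatrix
        (fun s : {x // x ∈ S} => (s : Fin N))
        (fun e : {x // x ∈ Sᶜ} => (e : Fin N))).rank = Sᶜ.card)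
    (Fsour Fdis₁ Fdis₂ : ℝ → (Fin N → ℝ))
    (hC2₁ : ∀ n ∈ S, ∀ t ∈ Set.Icc (0:ℝ) T, Fdis₁ t n = 0)
    (hC2₂ : ∀ n ∈ S, ∀ t ∈ Set.Icc (0:ℝ) T, Fdis₂ t n = 0)
    (X₁ X₁' X₁'' X₂ X₂' X₂'' : ℝ → (Fin N → ℝ))
    (hX₁ : ∀ t ∈ Set.Icc (0:ℝ) T, HasDerivWithinAt X₁ (X₁' t) (Set.Icc (0:ℝ) T) t)
    (hX₁' : ∀ t ∈ Set.Icc (0:ℝ) T, HasDerivWithinAt X₁' (X₁'' t) (Set.Icc (0:ℝ) T) t)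
    (hX₂ : ∀ t ∈ Set.Icc (0:ℝ) T, HasDerivWithinAt X₂ (X₂' t) (Set.Icc (0:ℝ) T) t)
    (hX₂' : ∀ t ∈ Set.Icc (0:ℝ) T, HasDerivWithinAt X₂' (X₂'' t) (Set.Icc (0:ℝ) T) t)
    (hODE₁ : ∀ t ∈ Set.Icc (0:ℝ) T,
      X₁'' t + η • X₁' t - (graphLaplacian G).mulVec (X₁ t) = Fsour t + Fdis₁ t)
    (hODE₂ : ∀ t ∈ Set.Icc (0:ℝ) T,
      X₂'' t + η • X₂' t - (graphLaplacian G).mulVec (X₂ t) = Fsour t + Fdis₂ t)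
    (hobs : ∀ n ∈ S, ∀ t ∈ Set.Icc (0:ℝ) T, X₁ t n = X₂ t n) :
    ∀ t ∈ Set.Icc (0:ℝ) T, Fdis₁ t = Fdis₂ t := by
  have hdiff := dampedWave_forcing_eq_zero_of_apply_eq_zero (η := η) (F := Fdis₁ - Fdis₂)
    (mulVec_injective_of_rank_eq_card (by rw [hdomabs, Fintype.card_coe]))
    (uniqueDiffOn_Icc (hT0.trans hT)) (fun t ht => (hX₁ t ht).sub (hX₂ t ht))
    (fun t ht => (hX₁' t ht).sub (hX₂' t ht))
    (fun t ht => by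
      simp only [Pi.sub_apply, smul_sub, mulVec_sub]
      linear_combination hODE₁ t ht - hODE₂ t ht)
    (fun i hi t ht => by rw [Pi.sub_apply, Pi.sub_apply, hC2₁ i hi t ht, hC2₂ i hi t ht, sub_zero])
    (fun i hi t ht => sub_eq_zero.mpr (hobs i hi t ht))
  exact fun t ht => sub_eq_zero.mp (hdiff t ht)

/-- Identifiability of disturbances with a strategic, dominantly absorbent observation set:
two disturbances vanishing on `[0,T⁰]` and supported away from `S` that produce the same
observations on `S` throughout `[0,T]` must coincide on `[0,T]`. -/
theorem disturbance_identifiability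
    {N : ℕ} (G : SimpleGraph (Fin N)) [DecidableRel G.Adj]
    (η T0 T : ℝ) (hη : 0 < η) (hT0 : 0 < T0) (hT : T0 < T)
    (S : Finset (Fin N)) (hstrat : Strategic (graphLaplacian G) S)
    (hdomabs : ((graphLaplacian G).submatrix
        (fun s : {x // x ∈ S} => (s : Fin N))
        (fun e : {x // x ∈ Sᶜ} => (e : Fin N))).rank = Sᶜ.card)
    (Fsour Fdis₁ Fdis₂ : ℝ → (Fin N → ℝ))
    (hFsour : ContinuousOn Fsour (Set.Icc (0:ℝ) T))
    (hFdis₁ : ContinuousOn Fdis₁ (Set.Icc (0:ℝ) T))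
    (hFdis₂ : ContinuousOn Fdis₂ (Set.Icc (0:ℝ) T))
    (hC1₁ : ∀ t ∈ Set.Icc (0:ℝ) T0, Fdis₁ t = 0)
    (hC1₂ : ∀ t ∈ Set.Icc (0:ℝ) T0, Fdis₂ t = 0)
    (hC2₁ : ∀ n ∈ S, ∀ t ∈ Set.Icc (0:ℝ) T, Fdis₁ t n = 0)
    (hC2₂ : ∀ n ∈ S, ∀ t ∈ Set.Icc (0:ℝ) T, Fdis₂ t n = 0)
    (X₁ X₁' X₁'' X₂ X₂' X₂'' : ℝ → (Fin N → ℝ))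
    (hX₁ : ∀ t ∈ Set.Icc (0:ℝ) T, HasDerivWithinAt X₁ (X₁' t) (Set.Icc (0:ℝ) T) t)
    (hX₁' : ∀ t ∈ Set.Icc (0:ℝ) T, HasDerivWithinAt X₁' (X₁'' t) (Set.Icc (0:ℝ) T) t)
    (hX₁'' : ContinuousOn X₁'' (Set.Icc (0:ℝ) T))
    (hX₂ : ∀ t ∈ Set.Icc (0:ℝ) T, HasDerivWithinAt X₂ (X₂' t) (Set.Icc (0:ℝ) T) t)
    (hX₂' : ∀ t ∈ Set.Icc (0:ℝ) T, HasDerivWithinAt X₂' (X₂'' t) (Set.Icc (0:ℝ) T) t)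
    (hX₂'' : ContinuousOn X₂'' (Set.Icc (0:ℝ) T))
    (hODE₁ : ∀ t ∈ Set.Icc (0:ℝ) T,
      X₁'' t + η • X₁' t - (graphLaplacian G).mulVec (X₁ t) = Fsour t + Fdis₁ t)
    (hODE₂ : ∀ t ∈ Set.Icc (0:ℝ) T,
      X₂'' t + η • X₂' t - (graphLaplacian G).mulVec (X₂ t) = Fsour t + Fdis₂ t)
    (hobs : ∀ n ∈ S, ∀ t ∈ Set.Icc (0:ℝ) T, X₁ t n = X₂ t n) :
    ∀ t ∈ Set.Icc (0:ℝ) T, Fdis₁ t = Fdis₂ t :=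
  disturbance_identifiability_general G η T0 T hT0 hT S hdomabs Fsour Fdis₁ Fdis₂ hC2₁ hC2₂ X₁ X₁'
    X₁'' X₂ X₂' X₂'' hX₁ hX₁' hX₂ hX₂' hODE₁ hODE₂ hobs
end

section
/- Let G be a finite simple graph on vertex set V = {1,…,N} with graph Laplacian Δ, let η > 0 and T⁰ < T̄, let S ⊆ V with E = V ∖ S, and assume Δ(S;E) has full column rank |E|. Let F : [T⁰,T̄] → ℝ^N be continuous with component F_n(t) = 0 for every n ∈ S and all t, and let X : [T⁰,T̄] → ℝ^N be twice continuously differentiable with X''(t) + η X'(t) − Δ X(t) = F(t) for all t ∈ [T⁰,T̄] and X(T⁰) = X'(T⁰) = 0. If the components x_n(t) = 0 for all t ∈ [T⁰,T̄] and every n ∈ S, then X(t) = 0 and F(t) = 0 for all t ∈ [T⁰,T̄]. -/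
/-!
On `S` the observation `x_n ≡ 0` forces `x_n' ≡ x_n'' ≡ 0`, so the `S`-rows of the equation
`X'' + η X' - Δ X = F` reduce to `(Δ X)_n = 0` for `n ∈ S`. Since `X` vanishes on `S`, these
rows read `Δ(S;E) X_E = 0`, and full column rank of `Δ(S;E)` gives `X_E = 0`. Hence `X ≡ 0` on
the interval, so `X' ≡ X'' ≡ 0` as well, and the equation gives `F ≡ 0`.
-/

namespace Matrix

theorem eq_zero_of_mulVec_eq_zero_of_rank_eq_card {K m n : Type*} [Field K] [Fintype n]
    {A : Matrix m n K} (hA : A.rank = Fintype.card n) {v : n → K} (hv : A *ᵥ v = 0) :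
    v = 0 := by
  have hker : Module.finrank K (LinearMap.ker A.mulVecLin) = 0 := by
    have := A.mulVecLin.finrank_range_add_finrank_ker
    rw [← Matrix.rank, hA, Module.finrank_fintype_fun_eq_card] at this
    omega
  exact ker_mulVecLin_eq_bot_iff.mp (Submodule.finrank_eq_zero.mp hker) v hv

variable {R n : Type*} [Fintype n] [DecidableEq n]

theorem submatrix_compl_mulVec_eq [NonUnitalNonAssocSemiring R] {A : Matrix n n R}
    {S : Finset n} {v : n → R} (hv : ∀ j ∈ S, v j = 0) :
    A.submatrix (fun i : S => (i : n)) (fun j : ↥Sᶜ => (j : n)) *ᵥ (fun j => v j) =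
      fun i : S => (A *ᵥ v) i := by
  funext i
  simp only [mulVec, dotProduct, submatrix_apply]
  rw [← Finset.sum_add_sum_compl S (fun j => A i j * v j),
    Finset.sum_eq_zero (s := S) fun j hj => by rw [hv j hj, mul_zero], zero_add,
    Finset.sum_coe_sort Sᶜ (fun j => A i j * v j)]

theorem eq_zero_of_mulVec_eq_zero_on_of_submatrix_rank [Field R] {A : Matrix n n R}
    {S : Finset n}
    (hA : (A.submatrix (fun i : S => (i : n)) (fun j : ↥Sᶜ => (j : n))).rank = Sᶜ.card)
    {v : n → R} (hvS : ∀ j ∈ S, v j = 0) (hAv : ∀ i ∈ S, (A *ᵥ v) i = 0) : v = 0 := by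
  have hvE : (fun j : ↥Sᶜ => v j) = 0 :=
    eq_zero_of_mulVec_eq_zero_of_rank_eq_card (by rw [hA, Fintype.card_coe])
      (by rw [submatrix_compl_mulVec_eq hvS]; exact funext fun i => hAv i i.2)
  funext j
  by_cases hj : j ∈ S
  · exact hvS j hj
  · exact congrFun hvE ⟨j, Finset.mem_compl.mpr hj⟩

end Matrix

theorem HasDerivWithinAt.apply_eq_zero_of_apply_eqOn_zero {𝕜 ι : Type*}
    [NontriviallyNormedField 𝕜] [Fintype ι] {E : ι → Type*} [∀ i, NormedAddCommGroup (E i)]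
    [∀ i, NormedSpace 𝕜 (E i)] {s : Set 𝕜} {t : 𝕜} {X : 𝕜 → ∀ i, E i} {X't : ∀ i, E i}
    (hX : HasDerivWithinAt X X't s t) (hs : UniqueDiffWithinAt 𝕜 s t) (ht : t ∈ s) {n : ι}
    (hXn : ∀ u ∈ s, X u n = 0) : X't n = 0 :=
  hs.eq_deriv s (hasDerivWithinAt_pi.mp hX n)
    ((hasDerivWithinAt_const t s 0).congr hXn (hXn t ht))

theorem dominantlyAbsorbent_zero_observation_implies_zero_general
    {N : ℕ} (G : SimpleGraph (Fin N)) [DecidableRel G.Adj]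
    (η T0 Tbar : ℝ) (hT : T0 < Tbar)
    (S : Finset (Fin N))
    (hrank : ((graphLaplacian G).submatrix
        (fun s : {x // x ∈ S} => (s : Fin N))
        (fun e : {x // x ∈ Sᶜ} => (e : Fin N))).rank = Sᶜ.card)
    (F : ℝ → (Fin N → ℝ))
    (hFS : ∀ n ∈ S, ∀ t ∈ Set.Icc T0 Tbar, F t n = 0)
    (X X' X'' : ℝ → (Fin N → ℝ))
    (hX : ∀ t ∈ Set.Icc T0 Tbar, HasDerivWithinAt X (X' t) (Set.Icc T0 Tbar) t)
    (hX' : ∀ t ∈ Set.Icc T0 Tbar, HasDerivWithinAt X' (X'' t) (Set.Icc T0 Tbar) t)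
    (hODE : ∀ t ∈ Set.Icc T0 Tbar,
      X'' t + η • X' t - (graphLaplacian G).mulVec (X t) = F t)
    (hobs : ∀ n ∈ S, ∀ t ∈ Set.Icc T0 Tbar, X t n = 0) :
    ∀ t ∈ Set.Icc T0 Tbar, X t = 0 ∧ F t = 0 := by
  have hI := uniqueDiffOn_Icc hT
  have hderivs_eq_zero : ∀ n, (∀ t ∈ Set.Icc T0 Tbar, X t n = 0) →
      ∀ t ∈ Set.Icc T0 Tbar, X' t n = 0 ∧ X'' t n = 0 := fun n hXn t ht =>
    have hX'n u hu := (hX u hu).apply_eq_zero_of_apply_eqOn_zero (hI u hu) hu hXn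
    ⟨hX'n t ht, (hX' t ht).apply_eq_zero_of_apply_eqOn_zero (hI t ht) ht hX'n⟩
  have hX_eq_zero : ∀ t ∈ Set.Icc T0 Tbar, X t = 0 := fun t ht =>
    Matrix.eq_zero_of_mulVec_eq_zero_on_of_submatrix_rank hrank (hobs · · t ht) fun n hn => by
      have hrow := congrFun (hODE t ht) n
      obtain ⟨hX'n, hX''n⟩ := hderivs_eq_zero n (hobs n hn) t ht
      simp only [Pi.add_apply, Pi.sub_apply, Pi.smul_apply, smul_eq_mul, hX'n, hX''n,
        hFS n hn t ht] at hrow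
      linarith
  intro t ht
  have hX'X'' n := hderivs_eq_zero n (fun s hs => congrFun (hX_eq_zero s hs) n) t ht
  have hX't : X' t = 0 := funext fun n => (hX'X'' n).1
  have hX''t : X'' t = 0 := funext fun n => (hX'X'' n).2
  refine ⟨hX_eq_zero t ht, ?_⟩
  rw [← hODE t ht, hX_eq_zero t ht, hX't, hX''t]
  simp

/-- With a dominantly absorbent observation set `S` (the submatrix `Δ(S;E)` has full column
rank, `E = V \ S`), a solution of `X'' + η X' - Δ X = F` on `[T⁰, T̄]` with zero initial data
at `T⁰`, with `F` supported away from `S`, whose components vanish on `S` throughout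
`[T⁰, T̄]`, must vanish identically, together with the forcing `F`. -/
theorem dominantlyAbsorbent_zero_observation_implies_zero
    {N : ℕ} (G : SimpleGraph (Fin N)) [DecidableRel G.Adj]
    (η T0 Tbar : ℝ) (hη : 0 < η) (hT : T0 < Tbar)
    (S : Finset (Fin N))
    (hrank : ((graphLaplacian G).submatrix
        (fun s : {x // x ∈ S} => (s : Fin N))
        (fun e : {x // x ∈ Sᶜ} => (e : Fin N))).rank = Sᶜ.card)
    (F : ℝ → (Fin N → ℝ)) (hF : ContinuousOn F (Set.Icc T0 Tbar))
    (hFS : ∀ n ∈ S, ∀ t ∈ Set.Icc T0 Tbar, F t n = 0)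
    (X X' X'' : ℝ → (Fin N → ℝ))
    (hX : ∀ t ∈ Set.Icc T0 Tbar, HasDerivWithinAt X (X' t) (Set.Icc T0 Tbar) t)
    (hX' : ∀ t ∈ Set.Icc T0 Tbar, HasDerivWithinAt X' (X'' t) (Set.Icc T0 Tbar) t)
    (hX'' : ContinuousOn X'' (Set.Icc T0 Tbar))
    (hODE : ∀ t ∈ Set.Icc T0 Tbar,
      X'' t + η • X' t - (graphLaplacian G).mulVec (X t) = F t)
    (hinit : X T0 = 0) (hinit' : X' T0 = 0)
    (hobs : ∀ n ∈ S, ∀ t ∈ Set.Icc T0 Tbar, X t n = 0) :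
    ∀ t ∈ Set.Icc T0 Tbar, X t = 0 ∧ F t = 0 :=
  dominantlyAbsorbent_zero_observation_implies_zero_general G η T0 Tbar hT S hrank F hFS X X' X'' hX
    hX' hODE hobs
end

section
/- Let a < b be real numbers, t_i = (a+b)/2, and let φ : [a,b] → ℝ be the hat function φ(t) = −(t−a)/2 for t ∈ [a,t_i] and φ(t) = (t−b)/2 for t ∈ [t_i,b]. Then for every real polynomial g of degree at most 2, ∫_a^b g(t) φ(t) dt = ((g(a) + 10 g(t_i) + g(b))/12) · φ(t_i) · (b−a)/2, where φ(t_i) = −(b−a)/4. -/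
set_option maxHeartbeats 800000

lemma cubic_integral (p q r s x y : ℝ) :
    ∫ t in x..y, (p * t ^ 3 + q * t ^ 2 + r * t + s) =
      p * (y ^ 4 - x ^ 4) / 4 + q * (y ^ 3 - x ^ 3) / 3 + r * (y ^ 2 - x ^ 2) / 2
        + s * (y - x) := by
  have hderiv : ∀ t : ℝ, HasDerivAt
      (fun t : ℝ => p * t ^ 4 / 4 + q * t ^ 3 / 3 + r * t ^ 2 / 2 + s * t)
      (p * t ^ 3 + q * t ^ 2 + r * t + s) t := by
    intro t
    have h := ((((hasDerivAt_pow 4 t).const_mul (p / 4)).add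
      ((hasDerivAt_pow 3 t).const_mul (q / 3))).add
      ((hasDerivAt_pow 2 t).const_mul (r / 2))).add
      ((hasDerivAt_pow 1 t).const_mul s)
    convert h using 1
    · rfl
    · rfl
    · funext u; simp only [Pi.add_apply]; ring
    · push_cast; ring
  rw [intervalIntegral.integral_eq_sub_of_hasDerivAt (fun t _ => hderiv t)
    (by apply Continuous.intervalIntegrable; fun_prop)]
  ring

/-- Exact integration formula for a quadratic against the hat (triangle) function:
for `φ` the piecewise affine function on `[a,b]` with `φ(t) = -(t-a)/2` on `[a, tᵢ]` and
`φ(t) = (t-b)/2` on `[tᵢ, b]` where `tᵢ = (a+b)/2` (so `φ(tᵢ) = -(b-a)/4`), and any real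
polynomial `g` of degree at most 2,
`∫ₐᵇ g(t) φ(t) dt = ((g(a) + 10 g(tᵢ) + g(b))/12) ⬝ φ(tᵢ) ⬝ (b-a)/2`. -/
theorem quadratic_hat_integration
    (a b : ℝ) (hab : a < b) (α β γ : ℝ)
    (g : ℝ → ℝ) (hg : ∀ t, g t = α * t ^ 2 + β * t + γ)
    (φ : ℝ → ℝ)
    (hφ₁ : ∀ t, a ≤ t → t ≤ (a + b) / 2 → φ t = -(t - a) / 2)
    (hφ₂ : ∀ t, (a + b) / 2 ≤ t → t ≤ b → φ t = (t - b) / 2) :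
    φ ((a + b) / 2) = -(b - a) / 4 ∧
    ∫ t in a..b, g t * φ t =
      ((g a + 10 * g ((a + b) / 2) + g b) / 12) * φ ((a + b) / 2) * ((b - a) / 2) := by
  set m := (a + b) / 2 with hm
  have ham : a ≤ m := by rw [hm]; linarith
  have hmb : m ≤ b := by rw [hm]; linarith
  have hφm : φ m = -(b - a) / 4 := by
    rw [hφ₁ m ham le_rfl, hm]; ring
  refine ⟨hφm, ?_⟩
  have hi1 : ∫ t in a..m, g t * φ t =
      ∫ t in a..m, ((-α/2) * t ^ 3 + ((α*a - β)/2) * t ^ 2 + ((β*a - γ)/2) * t + γ*a/2) := by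
    apply intervalIntegral.integral_congr
    intro t ht
    rw [Set.uIcc_of_le ham] at ht
    show g t * φ t = _
    rw [hφ₁ t ht.1 ht.2, hg]; ring
  have hi2 : ∫ t in m..b, g t * φ t =
      ∫ t in m..b, ((α/2) * t ^ 3 + ((β - α*b)/2) * t ^ 2 + ((γ - β*b)/2) * t + (-γ*b/2)) := by
    apply intervalIntegral.integral_congr
    intro t ht
    rw [Set.uIcc_of_le hmb] at ht
    show g t * φ t = _
    rw [hφ₂ t ht.1 ht.2, hg]; ring
  have hint1 : IntervalIntegrable (fun t => g t * φ t) MeasureTheory.volume a m := by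
    rw [intervalIntegrable_iff_integrableOn_Icc_of_le ham]
    apply MeasureTheory.IntegrableOn.congr_fun
      (f := fun t => (α * t ^ 2 + β * t + γ) * (-(t - a) / 2))
    · exact (Continuous.integrableOn_Icc (by fun_prop))
    · intro t ht; beta_reduce; rw [hg, hφ₁ t ht.1 ht.2]
    · exact measurableSet_Icc
  have hint2 : IntervalIntegrable (fun t => g t * φ t) MeasureTheory.volume m b := by
    rw [intervalIntegrable_iff_integrableOn_Icc_of_le hmb]
    apply MeasureTheory.IntegrableOn.congr_fun
      (f := fun t => (α * t ^ 2 + β * t + γ) * ((t - b) / 2))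
    · exact (Continuous.integrableOn_Icc (by fun_prop))
    · intro t ht; beta_reduce; rw [hg, hφ₂ t ht.1 ht.2]
    · exact measurableSet_Icc
  rw [← intervalIntegral.integral_add_adjacent_intervals hint1 hint2,
    hi1, hi2, cubic_integral, cubic_integral, hφm, hg a, hg b, hg m, hm]
  ring
end
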